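/- arXiv:2210.00771 — 2 statements merged into one kernel-verified Lean document; each statement's English description precedes it below -/
import Mathlib

section
/- Let X be a set, let a and ψ be bijections of X, and let S ⊆ X be a subset such that a(x) = x for every x ∉ S. Assume that no point of S is a periodic point of ψ and that no point of S is a periodic point of a ∘ ψ. Then Per(a ∘ ψ) = Per(ψ). -/
/-- The set of periodic points of a self-map `f`: points `x` with `f^[k] x = x` for
some `k ≥ 1`. -/
def Per {X : Type*} (f : X → X) : Set X :=
  {x | ∃ k : ℕ, 1 ≤ k ∧ f^[k] x = x}

lemma per_aux {X : Type*} (g b : X → X) (S : Set X)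
    (hb : ∀ x ∉ S, b x = x) (hg : ∀ x ∈ S, x ∉ Per g) :
    Per g ⊆ Per (fun y => b (g y)) := by
  rintro x ⟨k, hk, hx⟩
  have key : ∀ i : ℕ, (fun y => b (g y))^[i] x = g^[i] x := by
    intro i
    induction i with
    | zero => rfl
    | succ n ih =>
      rw [Function.iterate_succ_apply', Function.iterate_succ_apply', ih]
      show b (g (g^[n] x)) = g (g^[n] x)
      rw [show g (g^[n] x) = g^[n+1] x from (Function.iterate_succ_apply' g n x).symm]
      apply hb
      intro hmem
      exact hg _ hmem ⟨k, hk, by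
        rw [← Function.iterate_add_apply, Nat.add_comm, Function.iterate_add_apply, hx]⟩
  exact ⟨k, hk, by rw [key, hx]⟩

/-- if the bijection `a` is supported in `S`, no point of `S` is periodic
for `ψ`, and no point of `S` is periodic for `a ∘ ψ` (first `ψ`, then `a`), then
`Per (a ∘ ψ) = Per ψ`. -/
theorem per_of_composition_eq {X : Type*} (a ψ : Equiv.Perm X) (S : Set X)
    (ha : ∀ x ∉ S, a x = x)
    (hψS : ∀ x ∈ S, x ∉ Per (⇑ψ))
    (haψS : ∀ x ∈ S, x ∉ Per (fun y => a (ψ y))) :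
    Per (fun y => a (ψ y)) = Per (⇑ψ) := by
  apply Set.Subset.antisymm
  · have hinv : ∀ x ∉ S, a⁻¹ x = x := by
      intro x hx
      rw [Equiv.Perm.inv_eq_iff_eq]
      exact (ha x hx).symm
    have := per_aux (fun y => a (ψ y)) (⇑a⁻¹) S hinv haψS
    convert this using 2
    funext y
    simp
  · have := per_aux (⇑ψ) (⇑a) S ha hψS
    exact this
end

section
/- Let X be a set, let a and ψ be bijections of X, and let S ⊆ X be a subset such that a(x) = x for every x ∉ S. Assume that no point of S is a periodic point of a ∘ ψ. Then for every k ≥ 1 and every x ∈ X with (a ∘ ψ)^k (x) = x, the following hold: ψ^k(x) = x; ψ^j(x) ∉ S for every natural number j; and x ∉ ψ^i(S) for every 0 ≤ i ≤ k−1. In particular, Fix((a ∘ ψ)^k) is disjoint from the union ⋃_{i=0}^{k-1} ψ^i(S). -/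
/-- if the bijection `a` is supported in `S` and no point of `S` is a
periodic point of `a ∘ ψ` (first `ψ`, then `a`), then every fixed point `x` of
`(a ∘ ψ)^k` (`k ≥ 1`) satisfies `ψ^[k] x = x`, its whole `ψ`-orbit avoids `S`, and
`x ∉ ψ^i (S)` for `0 ≤ i ≤ k - 1`; in particular `Fix ((a ∘ ψ)^k)` is disjoint from
`⋃_{i=0}^{k-1} ψ^i (S)`. -/
theorem fixed_points_avoid_support {X : Type*} (a ψ : Equiv.Perm X) (S : Set X)
    (ha : ∀ x ∉ S, a x = x)
    (haψS : ∀ x ∈ S, x ∉ Per (fun y => a (ψ y))) :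
    ∀ k : ℕ, 1 ≤ k →
      (∀ x : X, (fun y => a (ψ y))^[k] x = x →
        (⇑ψ)^[k] x = x ∧
        (∀ j : ℕ, (⇑ψ)^[j] x ∉ S) ∧
        (∀ i : ℕ, i ≤ k - 1 → x ∉ (⇑ψ)^[i] '' S)) ∧
      Disjoint {x : X | (fun y => a (ψ y))^[k] x = x}
        (⋃ i ∈ Finset.range k, (⇑ψ)^[i] '' S) := by
  intro k hk
  set f : X → X := fun y => a (ψ y) with hf
  -- a maps S into S
  have haS : ∀ z ∈ S, a z ∈ S := by
    intro z hz
    by_contra h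
    have h2 : a (a z) = a z := ha _ h
    have h3 := a.injective h2
    rw [h3] at h
    exact h hz
  have main : ∀ x : X, f^[k] x = x →
      ∀ m : ℕ, f^[m] x = (⇑ψ)^[m] x ∧ (⇑ψ)^[m] x ∉ S := by
    intro x hx
    have hper : ∀ m : ℕ, f^[m] x ∈ Per f := by
      intro m
      refine ⟨k, hk, ?_⟩
      rw [← Function.iterate_add_apply, add_comm, Function.iterate_add_apply, hx]
    intro m
    induction m with
    | zero =>
      refine ⟨rfl, fun hxS => ?_⟩
      exact haψS _ hxS (hper 0)
    | succ n ih =>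
      obtain ⟨ih1, ih2⟩ := ih
      have hnotS : (⇑ψ)^[n + 1] x ∉ S := by
        intro hmem
        have h1 : a ((⇑ψ)^[n + 1] x) ∈ S := haS _ hmem
        have h2 : a ((⇑ψ)^[n + 1] x) = f^[n + 1] x := by
          rw [Function.iterate_succ_apply' f, Function.iterate_succ_apply' ψ, ih1, hf]
      -- now f^[n+1] x ∈ S but it is periodic
        rw [h2] at h1
        exact haψS _ h1 (hper (n + 1))
      refine ⟨?_, hnotS⟩
      rw [Function.iterate_succ_apply' f, ih1, hf]
      show a ((⇑ψ) ((⇑ψ)^[n] x)) = _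
      rw [← Function.iterate_succ_apply' ψ]
      exact ha _ hnotS
  constructor
  · intro x hx
    have hm := main x hx
    have hpsik : (⇑ψ)^[k] x = x := by
      have := (hm k).1
      rw [← this, hx]
    refine ⟨hpsik, fun j => (hm j).2, ?_⟩
    intro i hi
    rintro ⟨s, hs, hsx⟩
    have hik : i ≤ k := le_trans hi (Nat.sub_le k 1)
    have heq : (⇑ψ)^[i] ((⇑ψ)^[k - i] x) = (⇑ψ)^[i] s := by
      rw [hsx, ← Function.iterate_add_apply]
      have : i + (k - i) = k := Nat.add_sub_cancel' hik
      rw [this, hpsik]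
    have := Function.Injective.iterate ψ.injective i heq
    rw [← this] at hs
    exact (hm (k - i)).2 hs
  · rw [Set.disjoint_left]
    intro x hx hmem
    simp only [Set.mem_iUnion, Finset.mem_range] at hmem
    obtain ⟨i, hik, hxim⟩ := hmem
    have hm := main x hx
    have hpsik : (⇑ψ)^[k] x = x := by
      have := (hm k).1
      rw [← this, hx]
    obtain ⟨s, hs, hsx⟩ := hxim
    have hik' : i ≤ k := le_of_lt hik
    have heq : (⇑ψ)^[i] ((⇑ψ)^[k - i] x) = (⇑ψ)^[i] s := by
      rw [hsx, ← Function.iterate_add_apply]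
      have : i + (k - i) = k := Nat.add_sub_cancel' hik'
      rw [this, hpsik]
    have := Function.Injective.iterate ψ.injective i heq
    rw [← this] at hs
    exact (hm (k - i)).2 hs
end
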